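/- Let $\Theta(z)$ be an $m\times m$ matrix with holomorphic entries near the origin in $\mathbb{C}^n$ that is generically of full rank ($\det\Theta\not\equiv 0$). Then there exists an $m\times m$ matrix $Q(z)$ of polynomials such that $N(z):=Q(z)\cdot\Theta(z)$ has the property that the matrix $N_0$ formed from $N$ by taking the lowest-order homogeneous terms in each row is generically of full rank, i.e. $\det N_0\not\equiv 0$. -/

import Mathlib

noncomputable def homComp {n : ℕ} (m : ℕ) (F : MvPowerSeries (Fin n) ℂ) :
    MvPolynomial (Fin n) ℂ :=
  ∑ a ∈ Finset.Nat.antidiagonalTuple n m,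
    MvPolynomial.monomial (Finsupp.equivFunOnFinite.symm a)
      (MvPowerSeries.coeff (Finsupp.equivFunOnFinite.symm a) F)

/-- A polynomial viewed as a formal power series. -/
noncomputable def polyPS {n : ℕ} (p : MvPolynomial (Fin n) ℂ) : MvPowerSeries (Fin n) ℂ :=
  MvPolynomial.aeval (fun i => (MvPowerSeries.X i : MvPowerSeries (Fin n) ℂ)) p

/-- The order of vanishing of the \`j\`-th row of a matrix of formal power series. -/
noncomputable def rowOrder {n m : ℕ} (N : Matrix (Fin m) (Fin m) (MvPowerSeries (Fin n) ℂ))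
    (j : Fin m) : ℕ :=
  sInf {d | ∃ i, homComp d (N j i) ≠ 0}

/-! Let `d` be the order of `det Θ` and let `Q` be the adjugate of `Θ` truncated in total degree
`≤ d`. Since `adj Θ * Θ = det Θ • 1`, the product `Q Θ` agrees with `det Θ • 1` up to degree `d`.
Hence every row of `Q Θ` has order exactly `d`, and its matrix of lowest-order terms is the scalar
matrix of the lowest-order term of `det Θ`, whose determinant is a power of that nonzero term. -/

open MvPowerSeries Finsupp

lemma polyPS_eq_coe {n : ℕ} (p : MvPolynomial (Fin n) ℂ) :
    polyPS p = (p : MvPowerSeries (Fin n) ℂ) := by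
  have h : MvPolynomial.aeval (R := ℂ) (fun i => (X i : MvPowerSeries (Fin n) ℂ)) =
      MvPolynomial.coeToMvPowerSeries.algHom ℂ :=
    MvPolynomial.algHom_ext fun i => by simp
  simp [polyPS, h]

lemma coeff_homComp {n : ℕ} (e : ℕ) (F : MvPowerSeries (Fin n) ℂ) (b : Fin n →₀ ℕ) :
    MvPolynomial.coeff b (homComp e F) = if b.degree = e then coeff b F else 0 := by
  simp only [homComp, MvPolynomial.coeff_sum, MvPolynomial.coeff_monomial, Equiv.symm_apply_eq,
    Finset.sum_ite_eq', Finset.Nat.mem_antidiagonalTuple, Equiv.symm_apply_apply, degree_eq_sum,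
    equivFunOnFinite_apply]

lemma homComp_zero {n : ℕ} (e : ℕ) : homComp e (0 : MvPowerSeries (Fin n) ℂ) = 0 := by
  simp [homComp]

lemma coe_homComp {n : ℕ} (e : ℕ) (F : MvPowerSeries (Fin n) ℂ) :
    (homComp e F : MvPowerSeries (Fin n) ℂ) = homogeneousComponent e F := by
  ext b
  rw [MvPolynomial.coeff_coe, coeff_homComp, coeff_homogeneousComponent]

lemma homComp_eq_zero_iff {n : ℕ} (e : ℕ) (F : MvPowerSeries (Fin n) ℂ) :
    homComp e F = 0 ↔ homogeneousComponent e F = 0 := by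
  rw [← coe_homComp, MvPolynomial.coe_eq_zero_iff]

lemma homComp_congr {n : ℕ} {e : ℕ} {F G : MvPowerSeries (Fin n) ℂ}
    (h : ∀ b : Fin n →₀ ℕ, b.degree = e → coeff b F = coeff b G) :
    homComp e F = homComp e G := by
  ext b
  rw [coeff_homComp, coeff_homComp]
  split_ifs with hb
  exacts [h b hb, rfl]

lemma exists_homComp_ne_zero_and_eq_zero_of_lt {n : ℕ} {F : MvPowerSeries (Fin n) ℂ} (hF : F ≠ 0) :
    ∃ d, homComp d F ≠ 0 ∧ ∀ e < d, homComp e F = 0 := by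
  refine ⟨F.order.toNat, ?_, fun e he => ?_⟩
  · rw [ne_eq, homComp_eq_zero_iff]
    exact homogeneousComponent_of_order (ne_zero_iff_order_finite.mp hF)
  · rw [homComp_eq_zero_iff]
    apply homogeneousComponent_of_lt_order_eq_zero
    rw [← ne_zero_iff_order_finite.mp hF]
    exact_mod_cast he

lemma rowOrder_eq_of_homComp {n m : ℕ} {N : Matrix (Fin m) (Fin m) (MvPowerSeries (Fin n) ℂ)} {j : Fin m}
    {d : ℕ} (hlow : ∀ e < d, ∀ i, homComp e (N j i) = 0) (hd : ∃ i, homComp d (N j i) ≠ 0) :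
    rowOrder N j = d := by
  refine le_antisymm (Nat.sInf_le hd) (le_csInf ⟨d, hd⟩ ?_)
  rintro e ⟨i, he⟩
  by_contra! hlt
  exact he (hlow e hlt i)

section Truncation

variable {σ R : Type*} [Finite σ] [CommSemiring R] {k : ℕ} {x : σ →₀ ℕ}

lemma coeff_truncTotal_mul (f g : MvPowerSeries σ R) (hx : x.degree < k) :
    coeff x ((truncTotal k f : MvPowerSeries σ R) * g) = coeff x (f * g) := by
  classical
  rw [coeff_mul, coeff_mul]
  refine Finset.sum_congr rfl fun p hp => ?_
  have hp1 : p.1.degree < k :=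
    lt_of_le_of_lt (degree_mono (Finset.HasAntidiagonal.antidiagonal.fst_le hp)) hx
  rw [MvPolynomial.coeff_coe, coeff_truncTotal _ hp1]

lemma coeff_truncTotal_map_mul {ι : Type*} [Fintype ι] (A B : Matrix ι ι (MvPowerSeries σ R))
    (hx : x.degree < k) (j i : ι) :
    coeff x (((A.map fun f => (truncTotal k f : MvPowerSeries σ R)) * B) j i) =
      coeff x ((A * B) j i) := by
  simp only [Matrix.mul_apply, Matrix.map_apply, map_sum, coeff_truncTotal_mul _ _ hx]

end Truncation

lemma homComp_map_truncTotal_adjugate_mul {n m : ℕ}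
    (Θ : Matrix (Fin m) (Fin m) (MvPowerSeries (Fin n) ℂ)) {d e : ℕ} (he : e < d) (j i : Fin m) :
    homComp e (((Θ.adjugate.map (truncTotal d)).map polyPS * Θ) j i) =
      if j = i then homComp e Θ.det else 0 := by
  have hlow : homComp e (((Θ.adjugate.map (truncTotal d)).map polyPS * Θ) j i) =
      homComp e ((Θ.adjugate * Θ) j i) :=
    homComp_congr fun b hb => by
      simp only [Matrix.map_map, Function.comp_def, polyPS_eq_coe]
      exact coeff_truncTotal_map_mul _ _ (hb ▸ he) j i
  rw [hlow, Matrix.adjugate_mul]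
  split_ifs with hji <;> simp [hji, homComp_zero]

/-- for a generically invertible matrix `Θ` of holomorphic germs there is a
polynomial matrix `Q` such that the matrix of lowest-order homogeneous row terms of
`N = Q ⬝ Θ` is generically of full rank. -/
theorem stmt11 (n m : ℕ) (Θ : Matrix (Fin m) (Fin m) (MvPowerSeries (Fin n) ℂ))
    (hdet : Θ.det ≠ 0) :
    ∃ Q : Matrix (Fin m) (Fin m) (MvPolynomial (Fin n) ℂ),
      Matrix.det (Matrix.of fun j i =>
        homComp (rowOrder (Q.map polyPS * Θ) j) ((Q.map polyPS * Θ) j i)) ≠ 0 := by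
  obtain ⟨d, hd, hlow⟩ := exists_homComp_ne_zero_and_eq_zero_of_lt hdet
  refine ⟨Θ.adjugate.map (truncTotal (d + 1)), ?_⟩
  set N := (Θ.adjugate.map (truncTotal (d + 1))).map polyPS * Θ
  have hN : ∀ e ≤ d, ∀ j i, homComp e (N j i) = if j = i then homComp e Θ.det else 0 :=
    fun e he => homComp_map_truncTotal_adjugate_mul Θ (Nat.lt_succ_of_le he)
  have hrow : ∀ j, rowOrder N j = d := fun j =>
    rowOrder_eq_of_homComp (fun e he i => by rw [hN e he.le]; split_ifs <;> simp [hlow e he])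
      ⟨j, by rwa [hN d le_rfl, if_pos rfl]⟩
  have hdiag : (Matrix.of fun j i => homComp (rowOrder N j) (N j i)) =
      Matrix.diagonal fun _ => homComp d Θ.det := by
    ext j i
    rw [Matrix.of_apply, hrow j, hN d le_rfl, Matrix.diagonal_apply]
  rw [hdiag, Matrix.det_diagonal, Finset.prod_const]
  exact pow_ne_zero _ hd
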